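/- arXiv:1805.12076 — 3 statements merged into one kernel-verified Lean document; each statement's English description precedes it below -/
import Mathlib

section
/- Let d, h, c be positive integers, let U0 ∈ ℝ^{h×d} have rows u_1^0,…,u_h^0, and let α, β ∈ ℝ^h be nonnegative. For any x ∈ ℝ^d and any two pairs (V,U), (V',U') ∈ W (with columns v_j, v'_j of V, V' and rows u_j, u'_j of U, U'), the outputs of the corresponding two-layer ReLU networks satisfy ‖V[Ux]_+ − V'[U'x]_+‖₂ ≤ Σ_{j=1}^h ( (β_j ‖x‖₂ + |⟨u_j^0, x⟩|) ‖v_j − v'_j‖₂ + α_j |⟨u_j, x⟩ − ⟨u'_j, x⟩| ). -/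
noncomputable section

open Finset

/-- Euclidean norm of a finite-dimensional real vector. -/
def euclNorm {n : ℕ} (x : Fin n → ℝ) : ℝ := Real.sqrt (∑ i, (x i) ^ 2)

/-- ReLU activation. -/
def relu (t : ℝ) : ℝ := max t 0

/-- Two layer ReLU network `x ↦ V [U x]₊`. -/
def netF {d h c : ℕ} (V : Matrix (Fin c) (Fin h) ℝ) (U : Matrix (Fin h) (Fin d) ℝ)
    (x : Fin d → ℝ) : Fin c → ℝ :=
  fun i => ∑ j, V i j * relu (∑ k, U j k * x k)

/-- The margin operator. -/
def marginOp {c : ℕ} (z : Fin c → ℝ) (y : Fin c) : ℝ :=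
  z y - ⨆ i : {i : Fin c // i ≠ y}, z i.val

/-- The ramp loss with margin parameter `γ`. -/
def rampLoss {c : ℕ} (γ : ℝ) (z : Fin c → ℝ) (y : Fin c) : ℝ :=
  if γ < marginOp z y then 0
  else if marginOp z y < 0 then 1
  else 1 - marginOp z y / γ

/-- Sign associated to a boolean: `±1`. -/
def sg (b : Bool) : ℝ := if b then 1 else -1

/-! Write `a_j = ⟨u_j, x⟩` and `b_j = ⟨u'_j, x⟩`. Splitting each summand as
`v_j [a_j]₊ - v'_j [b_j]₊ = (v_j - v'_j) [a_j]₊ + v'_j ([a_j]₊ - [b_j]₊)`,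
the triangle inequality reduces the claim to two scalar bounds: `|[a_j]₊| ≤ |a_j|`, which
Cauchy–Schwarz against `u_j - u_j^0` bounds by `β_j ‖x‖ + |⟨u_j^0, x⟩|`, and the
`1`-Lipschitz property of the ReLU, `|[a_j]₊ - [b_j]₊| ≤ |a_j - b_j|`. -/

lemma euclNorm_eq_norm_toLp {n : ℕ} (x : Fin n → ℝ) : euclNorm x = ‖WithLp.toLp 2 x‖ := by
  simp [euclNorm, EuclideanSpace.norm_eq, sq_abs]

lemma euclNorm_nonneg {n : ℕ} (x : Fin n → ℝ) : 0 ≤ euclNorm x := Real.sqrt_nonneg _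

lemma euclNorm_add_le {n : ℕ} (x y : Fin n → ℝ) : euclNorm (x + y) ≤ euclNorm x + euclNorm y := by
  simpa only [euclNorm_eq_norm_toLp, WithLp.toLp_add] using norm_add_le _ _

lemma euclNorm_smul {n : ℕ} (r : ℝ) (x : Fin n → ℝ) : euclNorm (r • x) = |r| * euclNorm x := by
  rw [euclNorm_eq_norm_toLp, euclNorm_eq_norm_toLp, WithLp.toLp_smul, norm_smul, Real.norm_eq_abs]

lemma euclNorm_sum_le {n : ℕ} {ι : Type*} (s : Finset ι) (w : ι → Fin n → ℝ) :
    euclNorm (∑ j ∈ s, w j) ≤ ∑ j ∈ s, euclNorm (w j) := by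
  simpa only [euclNorm_eq_norm_toLp, WithLp.toLp_sum] using norm_sum_le _ _

lemma abs_sum_mul_le_euclNorm_mul {n : ℕ} (u x : Fin n → ℝ) :
    |∑ k, u k * x k| ≤ euclNorm u * euclNorm x := by
  rw [euclNorm, euclNorm, ← Real.sqrt_mul (sum_nonneg fun k _ => sq_nonneg (u k))]
  exact Real.abs_le_sqrt (sum_mul_sq_le_sq_mul_sq _ _ _)

lemma abs_sum_mul_le_of_euclNorm_sub_le {n : ℕ} {u u₀ : Fin n → ℝ} {β : ℝ}
    (hu : euclNorm (u - u₀) ≤ β) (x : Fin n → ℝ) :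
    |∑ k, u k * x k| ≤ β * euclNorm x + |∑ k, u₀ k * x k| := by
  have hsplit : ∑ k, u k * x k = ∑ k, (u - u₀) k * x k + ∑ k, u₀ k * x k := by
    rw [← sum_add_distrib]
    exact sum_congr rfl fun k _ => by simp only [Pi.sub_apply]; ring
  calc |∑ k, u k * x k|
      ≤ |∑ k, (u - u₀) k * x k| + |∑ k, u₀ k * x k| := hsplit ▸ abs_add_le _ _
    _ ≤ β * euclNorm x + |∑ k, u₀ k * x k| := by
      gcongr
      exact (abs_sum_mul_le_euclNorm_mul _ _).trans
        (mul_le_mul_of_nonneg_right hu (euclNorm_nonneg x))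

lemma abs_relu_le (t : ℝ) : |relu t| ≤ |t| := by
  rw [relu, abs_of_nonneg (le_max_right t 0)]
  exact max_le (le_abs_self t) (abs_nonneg t)

lemma abs_relu_sub_relu_le (s t : ℝ) : |relu s - relu t| ≤ |s - t| := by
  simpa only [relu, max_self, sub_zero] using abs_max_sub_max_le_abs s t 0

lemma netF_sub_netF {d h c : ℕ} (V V' : Matrix (Fin c) (Fin h) ℝ)
    (U U' : Matrix (Fin h) (Fin d) ℝ) (x : Fin d → ℝ) :
    netF V U x - netF V' U' x
      = ∑ j, (relu (∑ k, U j k * x k) • ((fun i => V i j) - fun i => V' i j)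
          + (relu (∑ k, U j k * x k) - relu (∑ k, U' j k * x k)) • fun i => V' i j) := by
  ext i
  simp only [netF, Pi.sub_apply, Finset.sum_apply, Pi.add_apply, Pi.smul_apply, smul_eq_mul,
    ← sum_sub_distrib]
  exact sum_congr rfl fun j _ => by ring

lemma euclNorm_netF_sub_netF_le {d h c : ℕ} (V V' : Matrix (Fin c) (Fin h) ℝ)
    (U U' : Matrix (Fin h) (Fin d) ℝ) (x : Fin d → ℝ) :
    euclNorm (netF V U x - netF V' U' x)
      ≤ ∑ j, (|relu (∑ k, U j k * x k)| * euclNorm ((fun i => V i j) - fun i => V' i j)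
          + |relu (∑ k, U j k * x k) - relu (∑ k, U' j k * x k)|
            * euclNorm fun i => V' i j) := by
  rw [netF_sub_netF]
  refine (euclNorm_sum_le _ _).trans (sum_le_sum fun j _ => ?_)
  rw [← euclNorm_smul, ← euclNorm_smul]
  exact euclNorm_add_le _ _

theorem network_perturbation_bound_general
    (d h c : ℕ)
    (U0 : Matrix (Fin h) (Fin d) ℝ) (α β : Fin h → ℝ)
    (x : Fin d → ℝ)
    (V V' : Matrix (Fin c) (Fin h) ℝ) (U U' : Matrix (Fin h) (Fin d) ℝ)
    (hU : ∀ j, euclNorm (U j - U0 j) ≤ β j)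
    (hV' : ∀ j, euclNorm (fun i => V' i j) ≤ α j) :
    euclNorm (netF V U x - netF V' U' x)
      ≤ ∑ j, ((β j * euclNorm x + |∑ k, U0 j k * x k|) *
            euclNorm ((fun i => V i j) - (fun i => V' i j))
          + α j * |(∑ k, U j k * x k) - ∑ k, U' j k * x k|) := by
  refine (euclNorm_netF_sub_netF_le V V' U U' x).trans (sum_le_sum fun j _ => ?_)
  gcongr ?_ + ?_
  · exact mul_le_mul_of_nonneg_right
      ((abs_relu_le _).trans (abs_sum_mul_le_of_euclNorm_sub_le (hU j) x)) (euclNorm_nonneg _)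
  · exact (mul_le_mul (abs_relu_sub_relu_le _ _) (hV' j) (euclNorm_nonneg _)
      (abs_nonneg _)).trans_eq (mul_comm _ _)

/-- perturbation bound for two layer ReLU networks in the class `W`. -/
theorem network_perturbation_bound
    (d h c : ℕ) (hd : 0 < d) (hh : 0 < h) (hc : 0 < c)
    (U0 : Matrix (Fin h) (Fin d) ℝ) (α β : Fin h → ℝ)
    (hα : ∀ j, 0 ≤ α j) (hβ : ∀ j, 0 ≤ β j)
    (x : Fin d → ℝ)
    (V V' : Matrix (Fin c) (Fin h) ℝ) (U U' : Matrix (Fin h) (Fin d) ℝ)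
    (hV : ∀ j, euclNorm (fun i => V i j) ≤ α j)
    (hU : ∀ j, euclNorm (U j - U0 j) ≤ β j)
    (hV' : ∀ j, euclNorm (fun i => V' i j) ≤ α j)
    (hU' : ∀ j, euclNorm (U' j - U0 j) ≤ β j) :
    euclNorm (netF V U x - netF V' U' x)
      ≤ ∑ j, ((β j * euclNorm x + |∑ k, U0 j k * x k|) *
            euclNorm ((fun i => V i j) - (fun i => V' i j))
          + α j * |(∑ k, U j k * x k) - ∑ k, U' j k * x k|) :=
  network_perturbation_bound_general d h c U0 α β x V V' U U' hU hV'

end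
end

section
/- Given any ε > 0, D a positive integer, β > 0 and p ≥ 2, consider the ℓ_p ball S^D_{p,β} = {x ∈ ℝ^D : ‖x‖_p ≤ β}. Set K = ⌈D / ((1+ε)^p − 1)⌉ and N = C(K + D − 1, D − 1) (a binomial coefficient). Then there exist N nonnegative vectors α^1,…,α^N ∈ ℝ^D such that, setting T_i = {x ∈ ℝ^D : |x_j| ≤ α^i_j for all j ∈ [D]}, one has S^D_{p,β} ⊆ ⋃_{i=1}^N T_i and ‖α^i‖₂ ≤ D^{1/2 − 1/p} β (1 + ε) for every i ∈ [N]. -/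
noncomputable section

open Finset

/-!
Cover the ℓ_p ball of radius β by the boxes with corners `α` given by
`α_j ^ p = β ^ p (P_j + 1) / K`, where `P` runs over the weak compositions of `K` into `D` parts,
of which there are `C(K + D - 1, D - 1)`. A point `x` of the ball lies in the box of any
composition dominating `⌊K |x_j| ^ p / β ^ p⌋`, and one exists because these floors sum to at
most `K`. Each corner has `‖α‖_p ^ p = β ^ p (K + D) / K ≤ β ^ p (1 + ε) ^ p` by the choice of
`K`, and the power mean inequality gives `‖α‖₂ ≤ D ^ (1/2 - 1/p) ‖α‖_p`.
-/

abbrev WeakComposition (ι : Type*) [Fintype ι] (K : ℕ) := {P : ι → ℕ // ∑ i, P i = K}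

namespace WeakComposition

variable {ι : Type*} [Fintype ι]

instance (K : ℕ) : Finite (WeakComposition ι K) := by
  classical exact Finite.of_equiv _ (Sym.equivNatSumOfFintype ι K)

theorem exists_le [Nonempty ι] {K : ℕ} {m : ι → ℕ} (hm : ∑ i, m i ≤ K) :
    ∃ P : WeakComposition ι K, m ≤ P.1 := by
  classical
  refine ⟨⟨m + Pi.single (Classical.arbitrary ι) (K - ∑ i, m i), ?_⟩,
    fun _ => Nat.le_add_right _ _⟩
  simp only [Pi.add_apply, sum_add_distrib, sum_pi_single', mem_univ, if_true]
  omega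

theorem natCard_fin_eq_choose {D : ℕ} (hD : 0 < D) (K : ℕ) :
    Nat.card (WeakComposition (Fin D) K) = (K + D - 1).choose (D - 1) := by
  rw [← Nat.card_congr (Sym.equivNatSumOfFintype (Fin D) K), Nat.card_eq_fintype_card,
    Sym.card_sym_eq_choose, Fintype.card_fin, add_comm D]
  exact Nat.choose_symm_of_eq_add (by omega)

end WeakComposition

theorem Real.Lq_le_card_rpow_mul_Lp_of_nonneg {ι : Type*} (s : Finset ι) {a : ι → ℝ}
    (ha : ∀ i ∈ s, 0 ≤ a i) {q p : ℝ} (hq : 0 < q) (hqp : q ≤ p) :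
    (∑ i ∈ s, a i ^ q) ^ q⁻¹ ≤ (#s : ℝ) ^ (q⁻¹ - p⁻¹) * (∑ i ∈ s, a i ^ p) ^ p⁻¹ := by
  have hp : 0 < p := hq.trans_le hqp
  have hpow : (∑ i ∈ s, a i ^ q) ^ (p / q) ≤ (#s : ℝ) ^ (p / q - 1) * ∑ i ∈ s, a i ^ p := by
    convert Real.rpow_sum_le_const_mul_sum_rpow_of_nonneg s ((one_le_div hq).2 hqp)
      (fun i hi => Real.rpow_nonneg (ha i hi) q) using 3 with i hi
    rw [← Real.rpow_mul (ha i hi), mul_div_cancel₀ _ hq.ne']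
  have hSq : 0 ≤ ∑ i ∈ s, a i ^ q := sum_nonneg fun i hi => Real.rpow_nonneg (ha i hi) q
  have hSp : 0 ≤ ∑ i ∈ s, a i ^ p := sum_nonneg fun i hi => Real.rpow_nonneg (ha i hi) p
  have := Real.rpow_le_rpow (Real.rpow_nonneg hSq _) hpow (inv_nonneg.2 hp.le)
  rwa [← Real.rpow_mul hSq, Real.mul_rpow (by positivity) hSp,
    ← Real.rpow_mul (Nat.cast_nonneg _), div_mul_eq_mul_div, sub_mul, one_mul,
    div_mul_eq_mul_div, mul_inv_cancel₀ hp.ne', one_div] at this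

section GridCorner

variable {ι : Type*} [Fintype ι] {K : ℕ} {β p : ℝ}

def gridCorner (β p : ℝ) (P : WeakComposition ι K) (j : ι) : ℝ :=
  β * ((P.1 j + 1) / K) ^ p⁻¹

theorem gridCorner_nonneg (hβ : 0 ≤ β) (P : WeakComposition ι K) (j : ι) :
    0 ≤ gridCorner β p P j := by
  unfold gridCorner; positivity

theorem gridCorner_rpow (hβ : 0 ≤ β) (hp : p ≠ 0) (P : WeakComposition ι K) (j : ι) :
    gridCorner β p P j ^ p = β ^ p * ((P.1 j + 1) / K) := by
  rw [gridCorner, Real.mul_rpow hβ (by positivity), Real.rpow_inv_rpow (by positivity) hp]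

theorem sum_gridCorner_rpow (hβ : 0 ≤ β) (hp : p ≠ 0) (P : WeakComposition ι K) :
    ∑ j, gridCorner β p P j ^ p = β ^ p * ((K + Fintype.card ι) / K) := by
  simp only [gridCorner_rpow hβ hp, ← mul_sum, ← sum_div, sum_add_distrib, ← Nat.cast_sum, P.2,
    sum_const, card_univ, nsmul_eq_mul, mul_one]

theorem exists_abs_le_gridCorner [Nonempty ι] (hK : 0 < K) (hβ : 0 < β) (hp : 0 < p)
    {x : ι → ℝ} (hx : ∑ j, |x j| ^ p ≤ β ^ p) :
    ∃ P : WeakComposition ι K, ∀ j, |x j| ≤ gridCorner β p P j := by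
  have hβp : 0 < β ^ p := Real.rpow_pos_of_pos hβ p
  set m : ι → ℕ := fun j => ⌊K * |x j| ^ p / β ^ p⌋₊
  have hm : ∑ j, m j ≤ K := by
    have : ∑ j, (m j : ℝ) ≤ K := calc
      _ ≤ ∑ j, K * |x j| ^ p / β ^ p := sum_le_sum fun j _ => Nat.floor_le (by positivity)
      _ = K * (∑ j, |x j| ^ p) / β ^ p := by rw [← sum_div, ← mul_sum]
      _ ≤ K := by rw [div_le_iff₀ hβp]; gcongr
    exact_mod_cast this
  obtain ⟨P, hmP⟩ := WeakComposition.exists_le hm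
  refine ⟨P, fun j => ?_⟩
  rw [← Real.rpow_le_rpow_iff (abs_nonneg _) (gridCorner_nonneg hβ.le _ _) hp,
    gridCorner_rpow hβ.le hp.ne', mul_div_assoc', le_div_iff₀ (by positivity)]
  have hfloor := Nat.lt_floor_add_one (K * |x j| ^ p / β ^ p)
  rw [div_lt_iff₀ hβp] at hfloor
  have : (m j : ℝ) ≤ P.1 j := by exact_mod_cast hmP j
  nlinarith

theorem sqrt_sum_sq_gridCorner_le (hβ : 0 ≤ β) (hp : 2 ≤ p) (P : WeakComposition ι K) {r : ℝ}
    (hr : 0 ≤ r) (hK : (K + Fintype.card ι) / K ≤ r ^ p) :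
    √(∑ j, gridCorner β p P j ^ 2) ≤ (Fintype.card ι : ℝ) ^ ((1 : ℝ) / 2 - 1 / p) * β * r := by
  have hp0 : 0 < p := by linarith
  have hl2 := Real.Lq_le_card_rpow_mul_Lp_of_nonneg univ
    (fun j _ => gridCorner_nonneg (p := p) hβ P j) two_pos hp
  simp only [Real.rpow_two, sum_gridCorner_rpow hβ hp0.ne', card_univ] at hl2
  rw [Real.sqrt_eq_rpow, one_div, one_div, mul_assoc]
  refine hl2.trans (mul_le_mul_of_nonneg_left ?_ (by positivity))
  rw [Real.mul_rpow (by positivity) (by positivity), Real.rpow_rpow_inv hβ hp0.ne']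
  exact mul_le_mul_of_nonneg_left ((Real.rpow_inv_le_iff_of_pos (by positivity) hr hp0).2 hK) hβ

end GridCorner

theorem div_natCeil_div_le {t c : ℝ} (ht : 0 < t) (hc : 0 < c) : t / ⌈t / c⌉₊ ≤ c := by
  rw [div_le_iff₀ (Nat.cast_pos.2 (Nat.ceil_pos.2 (div_pos ht hc))), ← div_le_iff₀' hc]
  exact Nat.le_ceil _

/-- ℓ_p covering lemma, an entrywise-dominating cover of the ℓ_p ball. -/
theorem lp_covering_lemma
    (ε : ℝ) (hε : 0 < ε) (D : ℕ) (hD : 0 < D) (β : ℝ) (hβ : 0 < β)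
    (p : ℝ) (hp : 2 ≤ p) :
    ∃ α : Fin (Nat.choose (⌈(D : ℝ) / ((1 + ε) ^ p - 1)⌉₊ + D - 1) (D - 1)) →
        Fin D → ℝ,
      (∀ i j, 0 ≤ α i j) ∧
      (∀ x : Fin D → ℝ, (∑ j, |x j| ^ p) ^ (1 / p) ≤ β →
        ∃ i, ∀ j, |x j| ≤ α i j) ∧
      (∀ i, Real.sqrt (∑ j, (α i j) ^ 2)
        ≤ (D : ℝ) ^ ((1 : ℝ) / 2 - 1 / p) * β * (1 + ε)) := by
  have hp0 : 0 < p := by linarith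
  have hc : 0 < (1 + ε) ^ p - 1 := sub_pos.2 (Real.one_lt_rpow (by linarith) hp0)
  set K := ⌈(D : ℝ) / ((1 + ε) ^ p - 1)⌉₊
  have hK : 0 < K := Nat.ceil_pos.2 (div_pos (Nat.cast_pos.2 hD) hc)
  have hKD : ((K : ℝ) + Fintype.card (Fin D)) / K ≤ (1 + ε) ^ p := by
    rw [Fintype.card_fin, add_div, div_self (by positivity)]
    linarith [div_natCeil_div_le (Nat.cast_pos.2 hD) hc]
  have : Nonempty (Fin D) := ⟨⟨0, hD⟩⟩
  let e := Finite.equivFinOfCardEq (WeakComposition.natCard_fin_eq_choose hD K)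
  refine ⟨fun i => gridCorner β p (e.symm i), fun i => gridCorner_nonneg hβ.le _,
    fun x hx => ?_, fun i => ?_⟩
  · rw [one_div, Real.rpow_inv_le_iff_of_pos (by positivity) hβ.le hp0] at hx
    obtain ⟨P, hP⟩ := exists_abs_le_gridCorner hK hβ hp0 hx
    exact ⟨e P, by simpa using hP⟩
  · simpa using sqrt_sum_sq_gridCorner_le hβ.le hp (e.symm i) (by linarith) hKD

end
end

section
/- For every integers h ≥ 2 and real p ≥ 2, the binomial coefficient satisfies ln C(⌈h/(e^p − 1)⌉ + h − 2, h − 1) ≤ (⌈e^{1−p} h⌉ − 1) ln(e h). -/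
noncomputable section

/-- for any `h ≥ 2` and real `p ≥ 2`,
`ln C(⌈h/(e^p − 1)⌉ + h − 2, h − 1) ≤ (⌈e^{1−p} h⌉ − 1) ln(e h)`. -/
theorem log_choose_le_ceil_exp (h : ℕ) (hh : 2 ≤ h) (p : ℝ) (hp : 2 ≤ p) :
    Real.log (Nat.choose (⌈(h : ℝ) / (Real.exp p - 1)⌉₊ + h - 2) (h - 1))
      ≤ ((⌈Real.exp (1 - p) * h⌉₊ - 1 : ℕ) : ℝ) * Real.log (Real.exp 1 * h) := by
  set M := ⌈(h : ℝ) / (Real.exp p - 1)⌉₊ with hMdef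
  set K := ⌈Real.exp (1 - p) * h⌉₊ with hKdef
  have he1 : (2:ℝ) < Real.exp 1 := by
    have := Real.exp_one_gt_d9; linarith
  have hhR : (2:ℝ) ≤ (h:ℝ) := by exact_mod_cast hh
  have hhpos : (0:ℝ) < h := by linarith
  have hexpp : p + 1 ≤ Real.exp p := Real.add_one_le_exp p
  have hpgt : (1:ℝ) < Real.exp p := by linarith
  -- exp (p-1) + 1 ≤ exp p
  have hsplit : Real.exp p = Real.exp (p - 1) * Real.exp 1 := by
    rw [← Real.exp_add]; ring_nf
  have hep1 : Real.exp 1 ≤ Real.exp (p - 1) := Real.exp_le_exp.mpr (by linarith)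
  have hkey : Real.exp (p - 1) + 1 ≤ Real.exp p := by nlinarith
  -- key: h/(exp p - 1) ≤ exp (1-p) * h
  have hdivle : (h : ℝ) / (Real.exp p - 1) ≤ Real.exp (1 - p) * h := by
    have h1 : Real.exp (1 - p) = (Real.exp (p - 1))⁻¹ := by
      rw [← Real.exp_neg]; ring_nf
    have hpe : (0:ℝ) < Real.exp (p - 1) := Real.exp_pos _
    rw [h1]
    rw [div_le_iff₀ (by linarith)]
    rw [inv_mul_eq_div, div_mul_eq_mul_div, le_div_iff₀ hpe]
    nlinarith
  have hMK : M ≤ K := Nat.ceil_le_ceil hdivle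
  have hM1 : 1 ≤ M := Nat.one_le_ceil_iff.mpr (div_pos hhpos (by linarith))
  have hMh : M ≤ h := by
    rw [hMdef, Nat.ceil_le]
    calc (h : ℝ) / (Real.exp p - 1) ≤ (h : ℝ) / 1 := by
          apply div_le_div_of_nonneg_left (by linarith) one_pos (by linarith)
      _ = (h : ℝ) := by rw [div_one]
  set n := M + h - 2 with hndef
  have hkn : h - 1 ≤ n := by omega
  have hsymm : n.choose (h - 1) = n.choose (M - 1) := by
    have := Nat.choose_symm hkn
    have hnk : n - (h - 1) = M - 1 := by omega
    rw [hnk] at this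
    rw [← this]
  have hbound : n.choose (M - 1) ≤ n ^ (M - 1) := Nat.choose_le_pow _ _
  -- n ≤ exp 1 * h  (as reals)
  have hn2h : (n : ℝ) ≤ 2 * h := by
    have : n ≤ 2 * h := by omega
    exact_mod_cast this
  have hneh : (n : ℝ) ≤ Real.exp 1 * h := by nlinarith
  have heh1 : (1:ℝ) ≤ Real.exp 1 * h := by nlinarith
  have hcast : ((n.choose (h - 1) : ℕ) : ℝ) ≤ (Real.exp 1 * h) ^ (K - 1) := by
    calc ((n.choose (h - 1) : ℕ) : ℝ) ≤ ((n ^ (M - 1) : ℕ) : ℝ) := by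
          exact_mod_cast hsymm ▸ hbound
      _ = (n : ℝ) ^ (M - 1) := by push_cast; ring
      _ ≤ (Real.exp 1 * h) ^ (M - 1) := by
          apply pow_le_pow_left₀ (by positivity) hneh
      _ ≤ (Real.exp 1 * h) ^ (K - 1) := by
          apply pow_le_pow_right₀ heh1 (by omega)
  have hposC : 0 < n.choose (h - 1) := Nat.choose_pos hkn
  calc Real.log (n.choose (h - 1))
      ≤ Real.log ((Real.exp 1 * h) ^ (K - 1)) := by
        apply Real.log_le_log (by exact_mod_cast hposC) hcast
    _ = ((K - 1 : ℕ) : ℝ) * Real.log (Real.exp 1 * h) := by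
        rw [Real.log_pow]
end
end
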